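/- arXiv:2203.11839 — 3 statements merged into one kernel-verified Lean document; each statement's English description precedes it below -/
import Mathlib

section
/- Let γ > 0 be a real number such that 1/2 − 1/γ − (π/(2γ²))(1 + π/4) ≥ 0, and let c = √(1/2 − 1/γ − (π/(2γ²))(1 + π/4)). Define x̄ : ℝ → ℝ by x̄(t) = 1/2 + π/(4γ) + c·sin(πt/2). Then x̄ is periodic with period 4 and for every t ∈ ℝ it satisfies the renewal equation x̄(t) = (γ/2) ∫_{−3}^{−1} x̄(t+θ)(1 − x̄(t+θ)) dθ. -/
/-!
Write `x̄ = A + c s` with `s t = sin (π t / 2)`, so that the integrand is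
`A (1 - A) + c (1 - 2A) s - c² s²`. The window `[-3, -1]` has length 2, half a period of `s`:
there `∫ s² = 1` and `∫ s (t + θ) dθ = -(4/π) s t`. The right-hand side of the renewal equation
is therefore `γ (A (1 - A) - c²/2) - (2γ/π) (1 - 2A) c s t`, and `A = 1/2 + π/(4γ)` makes the
coefficient of `s t` equal to `c`, while the value of `c²` makes the constant equal to `A`.
-/

open Real Set

theorem integral_sin_const_mul {ω : ℝ} (hω : ω ≠ 0) (a b : ℝ) :
    ∫ s in a..b, sin (ω * s) = (cos (ω * a) - cos (ω * b)) / ω := by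
  rw [intervalIntegral.integral_comp_mul_left (fun s => sin s) hω, integral_sin, smul_eq_mul,
    inv_mul_eq_div]

theorem integral_sin_const_mul_sq {ω : ℝ} (hω : ω ≠ 0) (a b : ℝ) :
    ∫ s in a..b, sin (ω * s) ^ 2 =
      (b - a) / 2 + (sin (ω * a) * cos (ω * a) - sin (ω * b) * cos (ω * b)) / (2 * ω) := by
  rw [intervalIntegral.integral_comp_mul_left (fun s => sin s ^ 2) hω, integral_sin_sq,
    smul_eq_mul]
  field_simp
  ring

theorem sin_pi_div_two_mul_add_two (a : ℝ) : sin (π / 2 * (a + 2)) = -sin (π / 2 * a) := by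
  rw [mul_add, div_mul_cancel₀ _ two_ne_zero, sin_add_pi]

theorem cos_pi_div_two_mul_add_two (a : ℝ) : cos (π / 2 * (a + 2)) = -cos (π / 2 * a) := by
  rw [mul_add, div_mul_cancel₀ _ two_ne_zero, cos_add_pi]

theorem integral_sin_pi_div_two_mul_add_two (a : ℝ) :
    ∫ s in a..a + 2, sin (π / 2 * s) = 4 / π * cos (π / 2 * a) := by
  rw [integral_sin_const_mul (by positivity), cos_pi_div_two_mul_add_two]
  field_simp
  ring

theorem integral_sin_pi_div_two_mul_sq_add_two (a : ℝ) :
    ∫ s in a..a + 2, sin (π / 2 * s) ^ 2 = 1 := by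
  rw [integral_sin_const_mul_sq (by positivity), sin_pi_div_two_mul_add_two,
    cos_pi_div_two_mul_add_two]
  ring

theorem integral_logistic_sin (A c t : ℝ) :
    ∫ θ in (-3 : ℝ)..(-1), (A + c * sin (π * (t + θ) / 2)) * (1 - (A + c * sin (π * (t + θ) / 2)))
      = 2 * A * (1 - A) - c ^ 2 - 4 / π * c * (1 - 2 * A) * sin (π * t / 2) := by
  let f : ℝ → ℝ := fun s => A * (1 - A) + c * (1 - 2 * A) * sin (π / 2 * s)
    - c ^ 2 * sin (π / 2 * s) ^ 2
  have hsin := (by fun_prop : Continuous fun s => sin (π / 2 * s)).intervalIntegrable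
    (μ := MeasureTheory.volume) (t - 3) (t - 3 + 2)
  have hsin_sq := (by fun_prop : Continuous fun s => sin (π / 2 * s) ^ 2).intervalIntegrable
    (μ := MeasureTheory.volume) (t - 3) (t - 3 + 2)
  calc _ = ∫ θ in (-3 : ℝ)..(-1), f (t + θ) := by
        simp only [f, show ∀ u, π * u / 2 = π / 2 * u from fun u => by ring]
        congr 1; ext θ; ring
    _ = ∫ s in t - 3..t - 3 + 2, f s := by
        rw [intervalIntegral.integral_comp_add_left]; congr 1; ring
    _ = 2 * A * (1 - A) + c * (1 - 2 * A) * (4 / π * cos (π / 2 * (t - 3))) - c ^ 2 := by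
        rw [intervalIntegral.integral_sub (intervalIntegrable_const.add (hsin.const_mul _))
            (hsin_sq.const_mul _), intervalIntegral.integral_add intervalIntegrable_const
            (hsin.const_mul _), intervalIntegral.integral_const, intervalIntegral.integral_const_mul,
          intervalIntegral.integral_const_mul, integral_sin_pi_div_two_mul_add_two,
          integral_sin_pi_div_two_mul_sq_add_two, smul_eq_mul]
        ring
    _ = _ := by
        rw [show π / 2 * (t - 3) = π * t / 2 - π / 2 - π by ring, cos_sub_pi, cos_sub_pi_div_two]
        ring

theorem stmt_0 (γ : ℝ) (hγ : 0 < γ)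
    (hrad : (0:ℝ) ≤ 1/2 - 1/γ - (π/(2*γ^2))*(1+π/4))
    (c : ℝ) (hc : c = Real.sqrt (1/2 - 1/γ - (π/(2*γ^2))*(1+π/4)))
    (x : ℝ → ℝ) (hx : ∀ t, x t = 1/2 + π/(4*γ) + c * Real.sin (π*t/2)) :
    (∀ t, x (t + 4) = x t) ∧
    (∀ t, x t = (γ/2) * ∫ θ in (-3:ℝ)..(-1:ℝ), x (t+θ) * (1 - x (t+θ))) := by
  have hc2 : c ^ 2 = 1/2 - 1/γ - (π/(2*γ^2))*(1+π/4) := by rw [hc, sq_sqrt hrad]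
  refine ⟨fun t => ?_, fun t => ?_⟩
  · rw [hx, hx, show π * (t + 4) / 2 = π * t / 2 + 2 * π by ring, sin_add_two_pi]
  · simp only [hx]
    rw [integral_logistic_sin, hc2]
    field_simp
    ring
end

section
/- Let γ > 0 be a real number such that 1/2 − 1/γ − (π/(2γ²))(1 + π/4) ≥ 0, let c = √(1/2 − 1/γ − (π/(2γ²))(1 + π/4)), and let x̄(t) = 1/2 + π/(4γ) + c·sin(πt/2). Then the derivative x̄′(t) = (cπ/2)·cos(πt/2) satisfies, for every t ∈ ℝ, the linearized renewal equation x̄′(t) = (γ/2) ∫_{−3}^{−1} (1 − 2x̄(t+θ)) x̄′(t+θ) dθ. In particular the linearized equation has a 4-periodic nonzero solution (corresponding to the trivial Floquet multiplier 1) whenever c > 0. -/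
open Real Set

/-! Writing `x̄ = a + c sin(πt/2)` with `1 - 2a = -π/(2γ)`, the integrand of the linearized
equation is `-(π/(2γ)) x̄' - c² π sin(π(t+θ)/2) cos(π(t+θ)/2)`. Over the delay interval
`[-3, -1]`, of length half the period 4, the second term `(c²π/2) sin(π(t+θ))` integrates to
zero, while `∫ cos(π(t+θ)/2) dθ = -(4/π) cos(πt/2)`. -/

lemma hasDerivAt_sin_pi_mul_div_two (t : ℝ) :
    HasDerivAt (fun t => sin (π * t / 2)) (π / 2 * cos (π * t / 2)) t := by
  have h := ((hasDerivAt_id t).const_mul π).div_const 2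
  simp only [id, mul_one] at h
  simpa only [mul_comm] using h.sin

lemma sin_pi_mul_sub_one_div_two (t : ℝ) : sin (π * (t + -1) / 2) = -cos (π * t / 2) := by
  rw [show π * (t + -1) / 2 = π * t / 2 - π / 2 by ring, sin_sub_pi_div_two]

lemma sin_pi_mul_sub_three_div_two (t : ℝ) : sin (π * (t + -3) / 2) = cos (π * t / 2) := by
  rw [show π * (t + -3) / 2 = π * t / 2 + π / 2 - 2 * π by ring, sin_sub_two_pi,
    sin_add_pi_div_two]

lemma integral_cos_pi_mul_add_div_two (t : ℝ) :
    ∫ θ in (-3 : ℝ)..(-1), cos (π * (t + θ) / 2) = -(4 / π) * cos (π * t / 2) := by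
  have hF (u : ℝ) : HasDerivAt (fun u => 2 / π * sin (π * u / 2)) (cos (π * u / 2)) u := by
    refine ((hasDerivAt_sin_pi_mul_div_two u).const_mul (2 / π)).congr_deriv ?_
    field_simp
  rw [intervalIntegral.integral_comp_add_left (fun u => cos (π * u / 2)),
    intervalIntegral.integral_eq_sub_of_hasDerivAt (fun u _ => hF u)
      (Continuous.intervalIntegrable (by fun_prop) _ _),
    sin_pi_mul_sub_one_div_two, sin_pi_mul_sub_three_div_two]
  ring

lemma integral_sin_mul_cos_pi_mul_add_div_two (t : ℝ) :
    ∫ θ in (-3 : ℝ)..(-1), sin (π * (t + θ) / 2) * cos (π * (t + θ) / 2) = 0 := by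
  have hF (u : ℝ) : HasDerivAt (fun u => sin (π * u / 2) ^ 2 / π)
      (sin (π * u / 2) * cos (π * u / 2)) u := by
    refine (((hasDerivAt_sin_pi_mul_div_two u).pow 2).div_const π).congr_deriv ?_
    field_simp
    ring
  rw [intervalIntegral.integral_comp_add_left (fun u => sin (π * u / 2) * cos (π * u / 2)),
    intervalIntegral.integral_eq_sub_of_hasDerivAt (fun u _ => hF u)
      (Continuous.intervalIntegrable (by fun_prop) _ _),
    sin_pi_mul_sub_one_div_two, sin_pi_mul_sub_three_div_two]
  ring

theorem stmt_1_general (γ : ℝ) (hγ : 0 < γ)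
    (c : ℝ)
    (x : ℝ → ℝ) (hx : ∀ t, x t = 1/2 + π/(4*γ) + c * Real.sin (π*t/2))
    (z : ℝ → ℝ) (hz : ∀ t, z t = (c*π/2) * Real.cos (π*t/2)) :
    (∀ t, HasDerivAt x (z t) t) ∧
    (∀ t, z t = (γ/2) * ∫ θ in (-3:ℝ)..(-1:ℝ), (1 - 2 * x (t+θ)) * z (t+θ)) ∧
    (0 < c → (∀ t, z (t + 4) = z t) ∧ z ≠ 0) := by
  obtain rfl : x = fun t => 1/2 + π/(4*γ) + c * sin (π*t/2) := funext hx
  obtain rfl : z = fun t => (c*π/2) * cos (π*t/2) := funext hz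
  refine ⟨fun t => ?_, fun t => ?_, fun hc => ⟨fun t => ?_, fun hz0 => ?_⟩⟩
  · exact (((hasDerivAt_sin_pi_mul_div_two t).const_mul c).const_add _).congr_deriv (by ring)
  · have hintegrand (θ : ℝ) : (1 - 2 * (1/2 + π/(4*γ) + c * sin (π*(t+θ)/2))) *
        ((c*π/2) * cos (π*(t+θ)/2)) = -(c * π ^ 2 / (4 * γ)) * cos (π*(t+θ)/2) -
          c ^ 2 * π * (sin (π*(t+θ)/2) * cos (π*(t+θ)/2)) := by
      field_simp
      ring
    simp only [hintegrand]
    rw [intervalIntegral.integral_sub (Continuous.intervalIntegrable (by fun_prop) _ _)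
      (Continuous.intervalIntegrable (by fun_prop) _ _),
      intervalIntegral.integral_const_mul, intervalIntegral.integral_const_mul,
      integral_cos_pi_mul_add_div_two, integral_sin_mul_cos_pi_mul_add_div_two]
    field_simp [hγ.ne']
    ring
  · simp only [show π*(t+4)/2 = π*t/2 + 2*π by ring, cos_add_two_pi]
  · have h0 := congrFun hz0 0
    simp only [mul_zero, zero_div, cos_zero, mul_one, Pi.zero_apply] at h0
    exact (by positivity : 0 < c*π/2).ne' h0

theorem stmt_1 (γ : ℝ) (hγ : 0 < γ)
    (hrad : (0:ℝ) ≤ 1/2 - 1/γ - (π/(2*γ^2))*(1+π/4))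
    (c : ℝ) (hc : c = Real.sqrt (1/2 - 1/γ - (π/(2*γ^2))*(1+π/4)))
    (x : ℝ → ℝ) (hx : ∀ t, x t = 1/2 + π/(4*γ) + c * Real.sin (π*t/2))
    (z : ℝ → ℝ) (hz : ∀ t, z t = (c*π/2) * Real.cos (π*t/2)) :
    (∀ t, HasDerivAt x (z t) t) ∧
    (∀ t, z t = (γ/2) * ∫ θ in (-3:ℝ)..(-1:ℝ), (1 - 2 * x (t+θ)) * z (t+θ)) ∧
    (0 < c → (∀ t, z (t + 4) = z t) ∧ z ≠ 0) :=
  stmt_1_general γ hγ c x hx z hz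
end

section
/- Let n be a positive integer, τ > 0, T > 0, let A, B : ℝ → (ℝⁿ →L ℝⁿ) be continuous maps into the continuous linear endomorphisms of ℝⁿ, and let ψ : [−τ, 0] → ℝⁿ be continuous. Then there exists a unique continuous function y : [−τ, T] → ℝⁿ such that y(t) = ψ(t) for all t ∈ [−τ, 0] and y(t) = ψ(0) + ∫₀ᵗ (A(s)·y(s) + B(s)·y(s − τ)) ds for all t ∈ [0, T]. -/
open Set Filter Function MeasureTheory Topology

/-!
The solution is the fixed point of the Picard operator
`y ↦ (ψ on [-τ, 0], ψ 0 + ∫₀ᵗ (A s (y s) + B s (y (s - τ))) ds on [0, T])` on `C([-τ, T], E)`.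
With `L` a bound for `‖A s‖ + ‖B s‖` on `[0, T]`, the delayed argument `s - τ` never exceeds `s`,
so the usual Volterra estimate survives: the `m`-th iterate of the operator is Lipschitz with
constant `(L T)ᵐ / m!`, hence some iterate is a contraction and the operator has a unique fixed point.
-/

theorem existsUnique_isFixedPt_of_dist_iterate_le {X : Type*} [MetricSpace X] [CompleteSpace X]
    [Nonempty X] {f : X → X} {c : ℕ → ℝ} (hc : Tendsto c atTop (𝓝 0))
    (hf : ∀ m x y, dist (f^[m] x) (f^[m] y) ≤ c m * dist x y) : ∃! x, IsFixedPt f x := by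
  obtain ⟨m, hm⟩ := (hc.eventually (gt_mem_nhds one_pos)).exists
  have hcon : ContractingWith (c m).toNNReal f^[m] :=
    ⟨Real.toNNReal_lt_one.2 hm, LipschitzWith.of_dist_le' (hf m)⟩
  exact ⟨_, hcon.isFixedPt_fixedPoint_iterate, fun x hx => hcon.fixedPoint_unique (hx.iterate m)⟩

namespace DelayDiffEq

variable {E : Type*} [NormedAddCommGroup E] [NormedSpace ℝ E]
  (A B : ℝ → E →L[ℝ] E) (τ : ℝ) (ψ : ℝ → E)

/-- The clamping makes `picard A B τ ψ y` continuous on all of `ℝ` as soon as `y` is. -/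
noncomputable def picard (y : ℝ → E) (t : ℝ) : E :=
  ψ (max (-τ) (min t 0)) + ∫ s in (0 : ℝ)..max t 0, (A s (y s) + B s (y (s - τ)))

variable {A B τ ψ}

theorem picard_of_mem_Icc (y : ℝ → E) {t : ℝ} (ht : t ∈ Icc (-τ) 0) :
    picard A B τ ψ y t = ψ t := by
  rw [picard, min_eq_left ht.2, max_eq_right ht.1, max_eq_right ht.2,
    intervalIntegral.integral_same, add_zero]

theorem picard_of_nonneg (hτ : 0 ≤ τ) (y : ℝ → E) {t : ℝ} (ht : 0 ≤ t) :
    picard A B τ ψ y t = ψ 0 + ∫ s in (0 : ℝ)..t, (A s (y s) + B s (y (s - τ))) := by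
  rw [picard, min_eq_right ht, max_eq_right (neg_nonpos.2 hτ), max_eq_left ht]

theorem eqOn_picard_iff (hτ : 0 ≤ τ) {T : ℝ} (hT : 0 ≤ T) {y : ℝ → E} :
    EqOn y (picard A B τ ψ y) (Icc (-τ) T) ↔
      (∀ t ∈ Icc (-τ) (0 : ℝ), y t = ψ t) ∧
        ∀ t ∈ Icc (0 : ℝ) T, y t = ψ 0 + ∫ s in (0 : ℝ)..t, (A s (y s) + B s (y (s - τ))) := by
  constructor
  · intro h
    exact ⟨fun t ht => (h ⟨ht.1, ht.2.trans hT⟩).trans (picard_of_mem_Icc y ht),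
      fun t ht => (h ⟨(neg_nonpos.2 hτ).trans ht.1, ht.2⟩).trans (picard_of_nonneg hτ y ht.1)⟩
  · rintro ⟨hneg, hpos⟩ t ht
    rcases le_total t 0 with h | h
    · rw [picard_of_mem_Icc y ⟨ht.1, h⟩]
      exact hneg t ⟨ht.1, h⟩
    · rw [picard_of_nonneg hτ y h]
      exact hpos t ⟨h, ht.2⟩

theorem picard_congr (hτ : 0 ≤ τ) {T : ℝ} (hT : 0 ≤ T) {y z : ℝ → E}
    (hyz : EqOn y z (Icc (-τ) T)) {t : ℝ} (ht : t ≤ T) :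
    picard A B τ ψ y t = picard A B τ ψ z t := by
  unfold picard
  congr 1
  refine intervalIntegral.integral_congr fun s hs => ?_
  rw [uIcc_of_le (le_max_right t 0)] at hs
  have hsT : s ≤ T := hs.2.trans (max_le ht hT)
  have hsI : s ∈ Icc (-τ) T := ⟨by linarith [hs.1], hsT⟩
  have hsτ : s - τ ∈ Icc (-τ) T := ⟨by linarith [hs.1], by linarith⟩
  simp only [hyz hsI, hyz hsτ]

theorem continuous_picard (hτ : 0 ≤ τ) (hA : Continuous A) (hB : Continuous B)
    (hψ : ContinuousOn ψ (Icc (-τ) 0)) {y : ℝ → E} (hy : Continuous y) :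
    Continuous (picard A B τ ψ y) := by
  have hclamp : ∀ t : ℝ, max (-τ) (min t 0) ∈ Icc (-τ) 0 := fun t =>
    ⟨le_max_left _ _, max_le (neg_nonpos.2 hτ) (min_le_right _ _)⟩
  have hf : Continuous fun s => A s (y s) + B s (y (s - τ)) :=
    (hA.clm_apply hy).add (hB.clm_apply (hy.comp (continuous_sub_right τ)))
  exact (hψ.comp_continuous (by fun_prop) hclamp).add
    ((intervalIntegral.continuous_primitive (fun a b => hf.intervalIntegrable a b) 0).comp
      (continuous_id.max continuous_const))

theorem norm_picard_sub_le (hτ : 0 ≤ τ) (hA : Continuous A) (hB : Continuous B)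
    {T L C : ℝ} (hL : ∀ s ∈ Icc 0 T, ‖A s‖ + ‖B s‖ ≤ L) (hC : 0 ≤ C) {m : ℕ}
    {y z : ℝ → E} (hy : Continuous y) (hz : Continuous z)
    (hyz : ∀ r ∈ Icc (-τ) T, ‖y r - z r‖ ≤ C * max r 0 ^ m) {t : ℝ} (ht : t ≤ T) :
    ‖picard A B τ ψ y t - picard A B τ ψ z t‖ ≤ L * C / (m + 1) * max t 0 ^ (m + 1) := by
  set t' := max t 0
  have ht' : 0 ≤ t' := le_max_right t 0
  have hint : ∀ w : ℝ → E, Continuous w →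
      IntervalIntegrable (fun s => A s (w s) + B s (w (s - τ))) volume 0 t' := fun w hw =>
    ((hA.clm_apply hw).add (hB.clm_apply (hw.comp (continuous_sub_right τ)))).intervalIntegrable _ _
  have hdiff : picard A B τ ψ y t - picard A B τ ψ z t =
      ∫ s in (0 : ℝ)..t', ((A s (y s) + B s (y (s - τ))) - (A s (z s) + B s (z (s - τ)))) := by
    simp only [picard]
    rw [intervalIntegral.integral_sub (hint y hy) (hint z hz)]
    abel
  have hpt : ∀ s ∈ Ioc 0 t',
      ‖(A s (y s) + B s (y (s - τ))) - (A s (z s) + B s (z (s - τ)))‖ ≤ L * C * s ^ m := by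
    intro s hs
    have hst : s ≤ t := (le_max_iff.mp hs.2).resolve_right hs.1.not_ge
    have hs0 : 0 ≤ s := hs.1.le
    have hnow := hyz s ⟨by linarith, hst.trans ht⟩
    rw [max_eq_left hs0] at hnow
    have hpast : ‖y (s - τ) - z (s - τ)‖ ≤ C * s ^ m :=
      (hyz (s - τ) ⟨by linarith, by linarith⟩).trans (by gcongr; exact max_le (by linarith) hs0)
    calc ‖(A s (y s) + B s (y (s - τ))) - (A s (z s) + B s (z (s - τ)))‖
        = ‖A s (y s - z s) + B s (y (s - τ) - z (s - τ))‖ := by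
          rw [map_sub, map_sub]
          congr 1
          abel
      _ ≤ ‖A s‖ * ‖y s - z s‖ + ‖B s‖ * ‖y (s - τ) - z (s - τ)‖ :=
          norm_add_le_of_le ((A s).le_opNorm _) ((B s).le_opNorm _)
      _ ≤ (‖A s‖ + ‖B s‖) * (C * s ^ m) := by rw [add_mul]; gcongr
      _ ≤ L * (C * s ^ m) := by gcongr; exact hL s ⟨hs0, hst.trans ht⟩
      _ = L * C * s ^ m := by ring
  calc ‖picard A B τ ψ y t - picard A B τ ψ z t‖
      ≤ ∫ s in (0 : ℝ)..t', L * C * s ^ m := by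
        rw [hdiff]
        exact intervalIntegral.norm_integral_le_of_norm_le ht' (ae_of_all _ hpt)
          ((continuous_const.mul (continuous_pow m)).intervalIntegrable _ _)
    _ = L * C / (m + 1) * t' ^ (m + 1) := by
        rw [intervalIntegral.integral_const_mul, integral_pow, zero_pow m.succ_ne_zero]
        ring

noncomputable def picardOp (hτ : 0 ≤ τ) {T : ℝ} (hτT : -τ ≤ T) (hA : Continuous A)
    (hB : Continuous B) (hψ : ContinuousOn ψ (Icc (-τ) 0)) (u : C(Icc (-τ) T, E)) :
    C(Icc (-τ) T, E) :=
  ContinuousMap.restrict (Icc (-τ) T)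
    ⟨picard A B τ ψ (IccExtend hτT u), continuous_picard hτ hA hB hψ u.continuous.Icc_extend'⟩

section picardOp

variable (hτ : 0 ≤ τ) {T : ℝ} (hτT : -τ ≤ T) (hA : Continuous A) (hB : Continuous B)
  (hψ : ContinuousOn ψ (Icc (-τ) 0))

theorem picardOp_apply (u : C(Icc (-τ) T, E)) (t : Icc (-τ) T) :
    picardOp hτ hτT hA hB hψ u t = picard A B τ ψ (IccExtend hτT u) t :=
  rfl

theorem dist_iterate_picardOp_apply_le (hT : 0 ≤ T) {L : ℝ}
    (hL : ∀ s ∈ Icc 0 T, ‖A s‖ + ‖B s‖ ≤ L) (u v : C(Icc (-τ) T, E)) (m : ℕ) (t : Icc (-τ) T) :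
    dist ((picardOp hτ hτT hA hB hψ)^[m] u t) ((picardOp hτ hτT hA hB hψ)^[m] v t) ≤
      L ^ m / m.factorial * dist u v * max (t : ℝ) 0 ^ m := by
  have hL0 : 0 ≤ L := (by positivity : (0 : ℝ) ≤ ‖A 0‖ + ‖B 0‖).trans (hL 0 ⟨le_rfl, hT⟩)
  induction m generalizing t with
  | zero => simpa using ContinuousMap.dist_apply_le_dist t
  | succ m ih =>
    set Φ := picardOp hτ hτT hA hB hψ
    rw [iterate_succ_apply', iterate_succ_apply', dist_eq_norm, picardOp_apply, picardOp_apply]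
    have hyz : ∀ r ∈ Icc (-τ) T, ‖IccExtend hτT (Φ^[m] u) r - IccExtend hτT (Φ^[m] v) r‖ ≤
        L ^ m / m.factorial * dist u v * max r 0 ^ m := fun r hr => by
      simpa only [IccExtend_of_mem hτT _ hr, dist_eq_norm] using ih ⟨r, hr⟩
    refine (norm_picard_sub_le hτ hA hB hL (by positivity) (Φ^[m] u).continuous.Icc_extend'
      (Φ^[m] v).continuous.Icc_extend' hyz t.2.2).trans_eq ?_
    rw [Nat.factorial_succ]
    push_cast
    field_simp
    ring

theorem dist_iterate_picardOp_le (hT : 0 ≤ T) {L : ℝ} (hL : ∀ s ∈ Icc 0 T, ‖A s‖ + ‖B s‖ ≤ L)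
    (m : ℕ) (u v : C(Icc (-τ) T, E)) :
    dist ((picardOp hτ hτT hA hB hψ)^[m] u) ((picardOp hτ hτT hA hB hψ)^[m] v) ≤
      (L * T) ^ m / m.factorial * dist u v := by
  have hL0 : 0 ≤ L := (by positivity : (0 : ℝ) ≤ ‖A 0‖ + ‖B 0‖).trans (hL 0 ⟨le_rfl, hT⟩)
  refine (ContinuousMap.dist_le (by positivity)).2 fun t => ?_
  refine (dist_iterate_picardOp_apply_le hτ hτT hA hB hψ hT hL u v m t).trans ?_
  rw [mul_pow, mul_div_right_comm, mul_right_comm]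
  gcongr
  exact max_le t.2.2 hT

theorem existsUnique_isFixedPt_picardOp [CompleteSpace E] (hT : 0 ≤ T) :
    ∃! u, IsFixedPt (picardOp hτ hτT hA hB hψ) u := by
  obtain ⟨L, hL⟩ := isCompact_Icc.bddAbove_image (hA.norm.add hB.norm).continuousOn (K := Icc 0 T)
  exact existsUnique_isFixedPt_of_dist_iterate_le
    (FloorSemiring.tendsto_pow_div_factorial_atTop (L * T))
    (dist_iterate_picardOp_le hτ hτT hA hB hψ hT fun s hs => hL (mem_image_of_mem _ hs))

theorem isFixedPt_picardOp_iff (hT : 0 ≤ T) {y : ℝ → E} (hy : ContinuousOn y (Icc (-τ) T)) :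
    IsFixedPt (picardOp hτ hτT hA hB hψ) ⟨(Icc (-τ) T).domRestrict y, hy.domRestrict⟩ ↔
      EqOn y (picard A B τ ψ y) (Icc (-τ) T) := by
  have hext : EqOn (IccExtend hτT ((Icc (-τ) T).domRestrict y)) y (Icc (-τ) T) := fun t ht =>
    IccExtend_of_mem hτT _ ht
  simp only [IsFixedPt, ContinuousMap.ext_iff, Subtype.forall]
  refine forall₂_congr fun t ht => ?_
  show picard A B τ ψ (IccExtend hτT ((Icc (-τ) T).domRestrict y)) t = y t ↔ _
  rw [picard_congr hτ hT hext ht.2]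
  exact eq_comm

end picardOp

theorem existsUnique_eqOn_picard [CompleteSpace E] (hτ : 0 ≤ τ) {T : ℝ} (hT : 0 ≤ T)
    (hA : Continuous A) (hB : Continuous B) (hψ : ContinuousOn ψ (Icc (-τ) 0)) :
    ∃ y : ℝ → E, (ContinuousOn y (Icc (-τ) T) ∧ EqOn y (picard A B τ ψ y) (Icc (-τ) T)) ∧
      ∀ y' : ℝ → E, ContinuousOn y' (Icc (-τ) T) → EqOn y' (picard A B τ ψ y') (Icc (-τ) T) →
        EqOn y' y (Icc (-τ) T) := by
  have hτT : -τ ≤ T := (neg_nonpos.2 hτ).trans hT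
  obtain ⟨u, hu, huniq⟩ := existsUnique_isFixedPt_picardOp hτ hτT hA hB hψ hT
  have hy : Continuous (IccExtend hτT u) := u.continuous.Icc_extend'
  have hyu : (⟨(Icc (-τ) T).domRestrict (IccExtend hτT u), hy.continuousOn.domRestrict⟩ :
      C(Icc (-τ) T, E)) = u := ContinuousMap.ext fun t => IccExtend_val hτT u t
  refine ⟨IccExtend hτT u, ⟨hy.continuousOn, ?_⟩, fun y' hy' hfix' t ht => ?_⟩
  · rw [← isFixedPt_picardOp_iff hτ hτT hA hB hψ hT hy.continuousOn, hyu]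
    exact hu
  · have hu' := huniq _ ((isFixedPt_picardOp_iff hτ hτT hA hB hψ hT hy').2 hfix')
    rw [IccExtend_of_mem hτT u ht, ← hu']
    rfl

end DelayDiffEq

theorem stmt_5_general (n : ℕ) (τ T : ℝ) (hτ : 0 < τ) (hT : 0 < T)
    (A B : ℝ → ((Fin n → ℝ) →L[ℝ] (Fin n → ℝ))) (hA : Continuous A) (hB : Continuous B)
    (ψ : ℝ → Fin n → ℝ) (hψ : ContinuousOn ψ (Set.Icc (-τ) 0)) :
    ∃ y : ℝ → Fin n → ℝ,
      (ContinuousOn y (Set.Icc (-τ) T) ∧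
        (∀ t ∈ Set.Icc (-τ) (0:ℝ), y t = ψ t) ∧
        (∀ t ∈ Set.Icc (0:ℝ) T,
          y t = ψ 0 + ∫ s in (0:ℝ)..t, (A s (y s) + B s (y (s - τ))))) ∧
      (∀ y' : ℝ → Fin n → ℝ,
        (ContinuousOn y' (Set.Icc (-τ) T) ∧
          (∀ t ∈ Set.Icc (-τ) (0:ℝ), y' t = ψ t) ∧
          (∀ t ∈ Set.Icc (0:ℝ) T,
            y' t = ψ 0 + ∫ s in (0:ℝ)..t, (A s (y' s) + B s (y' (s - τ))))) →
        Set.EqOn y' y (Set.Icc (-τ) T)) := by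
  obtain ⟨y, ⟨hy, hfix⟩, huniq⟩ := DelayDiffEq.existsUnique_eqOn_picard hτ.le hT.le hA hB hψ
  exact ⟨y, ⟨hy, (DelayDiffEq.eqOn_picard_iff hτ.le hT.le).1 hfix⟩, fun y' ⟨hy', hsol'⟩ =>
    huniq y' hy' ((DelayDiffEq.eqOn_picard_iff hτ.le hT.le).2 hsol')⟩

theorem stmt_5 (n : ℕ) (hn : 0 < n) (τ T : ℝ) (hτ : 0 < τ) (hT : 0 < T)
    (A B : ℝ → ((Fin n → ℝ) →L[ℝ] (Fin n → ℝ))) (hA : Continuous A) (hB : Continuous B)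
    (ψ : ℝ → Fin n → ℝ) (hψ : ContinuousOn ψ (Set.Icc (-τ) 0)) :
    ∃ y : ℝ → Fin n → ℝ,
      (ContinuousOn y (Set.Icc (-τ) T) ∧
        (∀ t ∈ Set.Icc (-τ) (0:ℝ), y t = ψ t) ∧
        (∀ t ∈ Set.Icc (0:ℝ) T,
          y t = ψ 0 + ∫ s in (0:ℝ)..t, (A s (y s) + B s (y (s - τ))))) ∧
      (∀ y' : ℝ → Fin n → ℝ,
        (ContinuousOn y' (Set.Icc (-τ) T) ∧
          (∀ t ∈ Set.Icc (-τ) (0:ℝ), y' t = ψ t) ∧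
          (∀ t ∈ Set.Icc (0:ℝ) T,
            y' t = ψ 0 + ∫ s in (0:ℝ)..t, (A s (y' s) + B s (y' (s - τ))))) →
        Set.EqOn y' y (Set.Icc (-τ) T)) :=
  stmt_5_general n τ T hτ hT A B hA hB ψ hψ
end
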